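/- arXiv:1608.08895 — 6 statements merged into one kernel-verified Lean document; each statement's English description precedes it below -/
import Mathlib

section
/- If the diagonal of a matrix A ∈ ℝ^{m×m} contains a non-positive element, then the congruence orbit D(A) contains a matrix that is not an S-matrix; i.e., there exist an invertible L and a vector q ∈ ℝ^m such that (LᵀAL)(ℝ^m_+) + q does not intersect ℝ^m_+. -/
open Matrix

/-- If the diagonal of `A` contains a non-positive element, then the congruence orbit of
`A` contains a matrix without the feasibility (S-) property. -/
theorem stmt6 {m : ℕ} (A : Matrix (Fin m) (Fin m) ℝ)
    (h : ∃ k : Fin m, A k k ≤ 0) :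
    ∃ (L : Matrix (Fin m) (Fin m) ℝ) (q : Fin m → ℝ), IsUnit L ∧
      ¬ ∃ x : Fin m → ℝ, (∀ i, 0 ≤ x i) ∧ ∀ i, 0 ≤ ((Lᵀ * A * L).mulVec x + q) i := by
  obtain ⟨k, hk⟩ := h
  set d : Fin m → ℝ := fun j => if j = k then 1 else (if 0 ≤ A k j then -1 else 1) with hd
  have hdk : d k = 1 := by simp [hd]
  have hdj : ∀ j, d k * A k j * d j ≤ 0 := by
    intro j
    rw [hdk, one_mul]
    by_cases hjk : j = k
    · subst hjk; rw [hdk, mul_one]; exact hk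
    · simp only [hd, if_neg hjk]
      by_cases hp : 0 ≤ A k j
      · rw [if_pos hp]; nlinarith
      · rw [if_neg hp]; nlinarith
  refine ⟨Matrix.diagonal d, fun j => if j = k then -1 else 0, ?_, ?_⟩
  · rw [Matrix.isUnit_diagonal]
    have hsq : ∀ j, d j * d j = 1 := by
      intro j; simp only [hd]; split <;> [norm_num; skip]; split <;> norm_num
    exact ⟨⟨d, d, funext hsq, funext hsq⟩, rfl⟩
  · rintro ⟨x, hx, hpos⟩
    have := hpos k
    rw [Pi.add_apply, Matrix.mulVec, dotProduct] at this
    norm_num at this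
    have hsum : ∑ j, d k * A k j * d j * x j ≤ 0 :=
      Finset.sum_nonpos fun j _ => mul_nonpos_of_nonpos_of_nonneg (hdj j) (hx j)
    linarith
end

section
/- If every member of the congruence orbit D(A) of A ∈ ℝ^{m×m} has the feasibility property (i.e., for every q there is x ≥ 0 with Bx + q ≥ 0 for each B ∈ D(A)), then A is positive definite. -/
/-!
Suppose `⟪A v, v⟫ ≤ 0` for some `v ≠ 0`. The half space `{u | ⟪v, A u⟫ ≤ 0}` contains `v` and
spans the whole space, so `{v}` extends to a basis lying inside it. Taking `L` with these basis
vectors as columns (and `v` as the `i`-th one), the `i`-th row of `Lᵀ A L` is nonpositive, and then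
no `x ≥ 0` makes `(Lᵀ A L x + q)ᵢ ≥ 0` for `q = -1`.
-/

open Matrix Module

section HalfSpace

variable {K V : Type*} [Field K] [LinearOrder K] [IsStrictOrderedRing K]
  [AddCommGroup V] [Module K V]

theorem Submodule.span_setOf_nonpos_eq_top (f : V →ₗ[K] K) :
    Submodule.span K {u | f u ≤ 0} = ⊤ := by
  refine Submodule.eq_top_iff'.2 fun u => ?_
  rcases le_total (f u) 0 with hu | hu
  · exact Submodule.subset_span hu
  · have hneg : -u ∈ {u | f u ≤ 0} := by simpa using hu
    simpa using Submodule.neg_mem _ (Submodule.subset_span hneg)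

theorem Module.Basis.exists_apply_eq_forall_nonpos {ι : Type*} (b₀ : Basis ι K V)
    (f : V →ₗ[K] K) {v : V} (hv : v ≠ 0) (hfv : f v ≤ 0) :
    ∃ (b : Basis ι K V) (i : ι), b i = v ∧ ∀ j, f (b j) ≤ 0 := by
  obtain ⟨s, hs, hvs, hspan, hli⟩ :=
    exists_linearIndepOn_id_extension (LinearIndepOn.singleton (R := K) hv)
      (Set.singleton_subset_iff.2 (show v ∈ {u | f u ≤ 0} from hfv))
  have hsp : ⊤ ≤ Submodule.span K (Set.range ((↑) : s → V)) := by
    rw [Subtype.range_coe, ← Submodule.span_setOf_nonpos_eq_top f]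
    exact Submodule.span_le.2 hspan
  let bs : Basis s K V := .mk hli hsp
  have hbs : ∀ u, bs u = u := Basis.mk_apply hli hsp
  let e := bs.indexEquiv b₀
  refine ⟨bs.reindex e, e ⟨v, hvs rfl⟩, ?_, fun j => ?_⟩
  · rw [Basis.reindex_apply, Equiv.symm_apply_apply, hbs]
  · rw [Basis.reindex_apply, hbs]
    exact hs (e.symm j).2

end HalfSpace

section Feasibility

variable {K m n : Type*} [CommRing K] [LinearOrder K] [IsStrictOrderedRing K] [Fintype n]

/-- The S-property of the paper. -/
def Matrix.HasFeasibilityProperty (B : Matrix m n K) : Prop :=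
  ∀ q : m → K, ∃ x : n → K, (∀ j, 0 ≤ x j) ∧ ∀ i, 0 ≤ (B *ᵥ x + q) i

theorem Matrix.HasFeasibilityProperty.exists_pos {B : Matrix m n K}
    (hB : B.HasFeasibilityProperty) (i : m) : ∃ j, 0 < B i j := by
  by_contra! hrow
  obtain ⟨x, hx, hBx⟩ := hB (fun _ => -1)
  have hnonpos : B i ⬝ᵥ x ≤ 0 := by
    simpa using dotProduct_le_dotProduct_of_nonneg_right (show B i ≤ 0 from hrow) hx
  have hi : 0 ≤ B i ⬝ᵥ x + -1 := hBx i
  linarith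

end Feasibility

/-- If every member of the congruence orbit of `A` has the feasibility (S-) property,
then `A` is positive definite. -/
theorem stmt10 {m : ℕ} (A : Matrix (Fin m) (Fin m) ℝ)
    (h : ∀ L : Matrix (Fin m) (Fin m) ℝ, IsUnit L →
      ∀ q : Fin m → ℝ, ∃ x : Fin m → ℝ, (∀ i, 0 ≤ x i) ∧
        ∀ i, 0 ≤ ((Lᵀ * A * L).mulVec x + q) i) :
    ∀ x : Fin m → ℝ, x ≠ 0 → 0 < (A.mulVec x) ⬝ᵥ x := by
  intro v hv
  by_contra! hAv
  let f := toLinearMap₂' ℝ (S₁ := ℝ) (S₂ := ℝ) A v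
  have hfv : f v ≤ 0 := by rwa [toLinearMap₂'_apply', dotProduct_comm]
  obtain ⟨b, i, hbi, hb⟩ :=
    (Pi.basisFun ℝ (Fin m)).exists_apply_eq_forall_nonpos f hv hfv
  let L := (of b)ᵀ
  have hL : IsUnit L := by
    rw [isUnit_transpose, ← linearIndependent_rows_iff_isUnit]
    exact b.linearIndependent
  obtain ⟨j, hj⟩ := HasFeasibilityProperty.exists_pos (h L hL) i
  have hentry : (Lᵀ * A * L) i j = f (b j) := by
    rw [mul_mul_apply, toLinearMap₂'_apply', ← hbi]
    rfl
  linarith [hb j]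
end

section
/- For A ∈ ℝ^{m×m}, the following are equivalent: (1) every member of D(A) is an S-matrix; (2) every member of D(A) is a Q-matrix; (3) every member of D(A) is a P-matrix (LCP has unique solution for all q); (4) A is positive definite. -/
/-!
If `A` is positive definite then so is every `Lᵀ A L`, and for a positive definite `B` the LCP
has exactly one solution. Uniqueness is the usual monotonicity argument. For existence, the
solutions are the fixed points of `x ↦ max (x - γ (B x + q)) 0`, and this map is a contraction
for a small `γ > 0` because `B` is strongly monotone and Lipschitz.

Conversely, if `⟪A v, v⟫ ≤ 0` for some `v ≠ 0`, extend `v` to a basis lying in the half-space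
`{y | ⟪v, A y⟫ ≤ 0}`, which spans because it contains `y` or `-y` for every `y`. If `L` has this
basis as columns, the row of `Lᵀ A L` belonging to `v` is nonpositive, so `Lᵀ A L` is not even an
S-matrix: no `x ≥ 0` makes that coordinate of `Lᵀ A L x - 1` nonnegative.
-/

open Matrix

/-- `B` has the feasibility (S-) property. -/
def Sprop {m : ℕ} (B : Matrix (Fin m) (Fin m) ℝ) : Prop :=
  ∀ q : Fin m → ℝ, ∃ x : Fin m → ℝ, (∀ i, 0 ≤ x i) ∧ ∀ i, 0 ≤ (B.mulVec x + q) i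

/-- `B` has the Q-property: `LCP(ℝ^m_+, B, q)` is solvable for every `q`. -/
def Qprop {m : ℕ} (B : Matrix (Fin m) (Fin m) ℝ) : Prop :=
  ∀ q : Fin m → ℝ, ∃ x : Fin m → ℝ, (∀ i, 0 ≤ x i) ∧
    (∀ i, 0 ≤ (B.mulVec x + q) i) ∧ x ⬝ᵥ (B.mulVec x + q) = 0

/-- `B` has the P-property: `LCP(ℝ^m_+, B, q)` has a unique solution for every `q`. -/
def Pprop {m : ℕ} (B : Matrix (Fin m) (Fin m) ℝ) : Prop :=
  ∀ q : Fin m → ℝ, ∃! x : Fin m → ℝ, (∀ i, 0 ≤ x i) ∧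
    (∀ i, 0 ≤ (B.mulVec x + q) i) ∧ x ⬝ᵥ (B.mulVec x + q) = 0

open scoped NNReal RealInnerProductSpace

theorem Submodule.span_eq_top_of_forall_mem_or_neg_mem {R V : Type*} [Ring R] [AddCommGroup V]
    [Module R V] {s : Set V} (hs : ∀ y, y ∈ s ∨ -y ∈ s) : Submodule.span R s = ⊤ := by
  refine Submodule.eq_top_iff'.2 fun y => ?_
  rcases hs y with h | h
  · exact Submodule.subset_span h
  · simpa using Submodule.neg_mem _ (Submodule.subset_span (R := R) h)

theorem Matrix.exists_isUnit_row_eq_of_span_eq_top {K n : Type*} [Field K] [Fintype n]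
    [DecidableEq n] {s : Set (n → K)} (hs : Submodule.span K s = ⊤) {v : n → K} (hvs : v ∈ s)
    (hv : v ≠ 0) : ∃ L : Matrix n n K, IsUnit L ∧ (∃ k, L k = v) ∧ ∀ j, L j ∈ s := by
  obtain ⟨t, hts, hvt, hst, hli⟩ := exists_linearIndepOn_id_extension
    ((linearIndepOn_singleton_iff K).2 hv) (Set.singleton_subset_iff.2 hvs)
  have hspan : ⊤ ≤ Submodule.span K (Set.range ((↑) : t → n → K)) := by
    rw [Subtype.range_coe, ← hs]
    exact Submodule.span_le.2 hst
  let e := (Module.Basis.mk hli hspan).indexEquiv (Pi.basisFun K n)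
  let b := (Module.Basis.mk hli hspan).reindex e
  have hb : ∀ i, b i = e.symm i := by simp [b]
  refine ⟨Matrix.of b, linearIndependent_rows_iff_isUnit.1 b.linearIndependent,
    ⟨e ⟨v, hvt rfl⟩, ?_⟩, fun j => hts ?_⟩
  · exact (hb _).trans (by simp)
  · change b j ∈ t
    exact (hb j) ▸ (e.symm j).2

theorem Matrix.mul_mul_transpose_apply {n R : Type*} [Fintype n] [CommSemiring R]
    (L A : Matrix n n R) (i j : n) : (L * A * Lᵀ) i j = L i ⬝ᵥ A *ᵥ L j := by
  rw [Matrix.mul_assoc]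
  rfl

theorem exists_pos_mul_norm_sq_le {E : Type*} [NormedAddCommGroup E] [NormedSpace ℝ E]
    [FiniteDimensional ℝ E] {f : E → ℝ} (hf : Continuous f)
    (hsmul : ∀ (c : ℝ) z, f (c • z) = c ^ 2 * f z) (hpos : ∀ z, z ≠ 0 → 0 < f z) :
    ∃ μ > 0, ∀ z, μ * ‖z‖ ^ 2 ≤ f z := by
  obtain ⟨μ, hμ, hμle⟩ : ∃ μ > 0, ∀ u ∈ Metric.sphere (0 : E) 1, μ ≤ f u := by
    rcases (Metric.sphere (0 : E) 1).eq_empty_or_nonempty with h | h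
    · exact ⟨1, one_pos, by simp [h]⟩
    · obtain ⟨u, hu, hmin⟩ := (isCompact_sphere 0 1).exists_isMinOn h hf.continuousOn
      exact ⟨f u, hpos u (ne_zero_of_mem_unit_sphere ⟨u, hu⟩), hmin⟩
  refine ⟨μ, hμ, fun z => ?_⟩
  rcases eq_or_ne z 0 with rfl | hz
  · simpa using (hsmul 0 0).ge
  have hz' : ‖z‖ ≠ 0 := norm_ne_zero_iff.2 hz
  have h := hμle (‖z‖⁻¹ • z) (by simp [norm_smul, hz'])
  rw [hsmul] at h
  calc μ * ‖z‖ ^ 2 ≤ ‖z‖⁻¹ ^ 2 * f z * ‖z‖ ^ 2 := by gcongr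
    _ = f z := by field_simp

theorem ContinuousLinearMap.exists_lipschitzWith_id_sub_smul_lt_one {E : Type*}
    [NormedAddCommGroup E] [InnerProductSpace ℝ E] (T : E →L[ℝ] E) {μ : ℝ} (hμ : 0 < μ)
    (hT : ∀ z, μ * ‖z‖ ^ 2 ≤ ⟪z, T z⟫) :
    ∃ γ : ℝ, 0 < γ ∧ ∃ k : ℝ≥0, k < 1 ∧ LipschitzWith k (ContinuousLinearMap.id ℝ E - γ • T) := by
  set C := ‖T‖ + 1
  set γ := μ / C ^ 2
  have hγ : 0 < γ := by positivity
  have hγC : γ * C ^ 2 = μ := div_mul_cancel₀ μ (by positivity)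
  have hsq : ∀ z, ‖z - γ • T z‖ ^ 2 ≤ (1 - γ * μ) * ‖z‖ ^ 2 := by
    intro z
    have hTz : ‖T z‖ ^ 2 ≤ C ^ 2 * ‖z‖ ^ 2 := by
      rw [← mul_pow]
      gcongr
      exact (T.le_opNorm z).trans (by gcongr; linarith)
    rw [norm_sub_sq_real, inner_smul_right, norm_smul, Real.norm_of_nonneg hγ.le]
    nlinarith [mul_le_mul_of_nonneg_left (hT z) hγ.le, mul_le_mul_of_nonneg_left hTz (sq_nonneg γ)]
  refine ⟨γ, hγ, (√(1 - γ * μ)).toNNReal, ?_, ?_⟩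
  · rw [Real.toNNReal_lt_one, Real.sqrt_lt' one_pos]
    nlinarith
  · refine (ContinuousLinearMap.lipschitz _).weaken ?_
    rw [← NNReal.coe_le_coe, coe_nnnorm, Real.coe_toNNReal _ (Real.sqrt_nonneg _)]
    refine ContinuousLinearMap.opNorm_le_bound _ (Real.sqrt_nonneg _) fun z => ?_
    calc ‖z - γ • T z‖ = √(‖z - γ • T z‖ ^ 2) := (Real.sqrt_sq (norm_nonneg _)).symm
      _ ≤ √((1 - γ * μ) * ‖z‖ ^ 2) := Real.sqrt_le_sqrt (hsq z)
      _ = √(1 - γ * μ) * ‖z‖ := by rw [Real.sqrt_mul' _ (sq_nonneg _), Real.sqrt_sq (norm_nonneg _)]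

theorem EuclideanSpace.lipschitzWith_one_max_zero {n : Type*} [Fintype n] :
    LipschitzWith 1 fun z : EuclideanSpace ℝ n => WithLp.toLp 2 fun i => max (z i) 0 := by
  refine LipschitzWith.of_dist_le_mul fun (x y : EuclideanSpace ℝ n) => ?_
  rw [EuclideanSpace.dist_eq, EuclideanSpace.dist_eq, NNReal.coe_one, one_mul]
  gcongr with i
  simpa [Real.dist_eq] using abs_max_sub_max_le_abs (x i) (y i) 0

theorem nonneg_and_mul_eq_zero_of_max_sub_mul_eq_self {a w γ : ℝ} (hγ : 0 < γ)
    (h : max (a - γ * w) 0 = a) : 0 ≤ a ∧ 0 ≤ w ∧ a * w = 0 := by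
  rcases le_total (a - γ * w) 0 with hle | hle
  · rw [max_eq_right hle] at h
    subst h
    exact ⟨le_rfl, by nlinarith, zero_mul w⟩
  · rw [max_eq_left hle] at h
    have hw : w = 0 := by
      rcases mul_eq_zero.1 (show γ * w = 0 by linarith) with h | h
      · exact absurd h hγ.ne'
      · exact h
    subst hw
    exact ⟨by linarith, le_rfl, mul_zero a⟩

section LCP

variable {n : Type*} [Fintype n]

def IsLCPSolution (B : Matrix n n ℝ) (q x : n → ℝ) : Prop :=
  (∀ i, 0 ≤ x i) ∧ (∀ i, 0 ≤ (B *ᵥ x + q) i) ∧ x ⬝ᵥ (B *ᵥ x + q) = 0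

/-- Positive definiteness without symmetry: unlike `Matrix.PosDef`, no Hermitian condition. -/
def Matrix.PosDefQuad (A : Matrix n n ℝ) : Prop := ∀ x, x ≠ 0 → 0 < A *ᵥ x ⬝ᵥ x

theorem Matrix.PosDefQuad.exists_isLCPSolution [DecidableEq n] {B : Matrix n n ℝ}
    (hB : B.PosDefQuad) (q : n → ℝ) : ∃ x, IsLCPSolution B q x := by
  let T := toEuclideanCLM (n := n) (𝕜 := ℝ) B
  obtain ⟨μ, hμ, hμT⟩ := exists_pos_mul_norm_sq_le (f := fun z : EuclideanSpace ℝ n => ⟪z, T z⟫)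
    (by fun_prop)
    (fun c z => by simp only [map_smul, real_inner_smul_left, real_inner_smul_right]; ring)
    fun z hz => by
      rw [inner_toEuclideanCLM, dotProduct_comm]
      exact hB _ (by simpa using hz)
  obtain ⟨γ, hγ, k, hk, hS⟩ := T.exists_lipschitzWith_id_sub_smul_lt_one hμ hμT
  let F : EuclideanSpace ℝ n → EuclideanSpace ℝ n :=
    (fun z => (WithLp.toLp 2 fun i => max (z i) 0 : EuclideanSpace ℝ n)) ∘
    fun z => (ContinuousLinearMap.id ℝ (EuclideanSpace ℝ n) - γ • T) z - γ • WithLp.toLp 2 q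
  have hF : ContractingWith k F := ⟨hk, by
    simpa only [add_zero, one_mul] using EuclideanSpace.lipschitzWith_one_max_zero.comp
      (hS.sub (LipschitzWith.const (γ • WithLp.toLp 2 q)))⟩
  obtain ⟨x, hxF⟩ : ∃ x, F x = x := ⟨_, hF.fixedPoint_isFixedPt⟩
  have hx : ∀ i, max (x i - γ * (B *ᵥ x + q) i) 0 = x i := fun i => by
    have := congrArg (fun z => z i) hxF
    simpa [F, T, mul_add, sub_sub] using this
  have hsol := fun i => nonneg_and_mul_eq_zero_of_max_sub_mul_eq_self hγ (hx i)
  exact ⟨x, fun i => (hsol i).1, fun i => (hsol i).2.1,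
    Finset.sum_eq_zero fun i _ => (hsol i).2.2⟩

theorem IsLCPSolution.eq_of_posDefQuad {B : Matrix n n ℝ} (hB : B.PosDefQuad) {q x y : n → ℝ}
    (hx : IsLCPSolution B q x) (hy : IsLCPSolution B q y) : x = y := by
  by_contra hne
  set wx := B *ᵥ x + q
  set wy := B *ᵥ y + q
  have hxy : 0 ≤ wx ⬝ᵥ y := dotProduct_nonneg_of_nonneg (fun i => hx.2.1 i) (fun i => hy.1 i)
  have hyx : 0 ≤ wy ⬝ᵥ x := dotProduct_nonneg_of_nonneg (fun i => hy.2.1 i) (fun i => hx.1 i)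
  have key : B *ᵥ (x - y) ⬝ᵥ (x - y) = -(wx ⬝ᵥ y + wy ⬝ᵥ x) :=
    calc B *ᵥ (x - y) ⬝ᵥ (x - y) = (wx - wy) ⬝ᵥ (x - y) := by
          rw [mulVec_sub, add_sub_add_right_eq_sub]
      _ = x ⬝ᵥ wx + y ⬝ᵥ wy - (wx ⬝ᵥ y + wy ⬝ᵥ x) := by
          simp only [sub_dotProduct, dotProduct_sub, dotProduct_comm x wx, dotProduct_comm y wy]
          ring
      _ = -(wx ⬝ᵥ y + wy ⬝ᵥ x) := by rw [hx.2.2, hy.2.2]; ring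
  linarith [hB _ (sub_ne_zero.2 hne)]

theorem Matrix.PosDefQuad.transpose_mul_mul {A L : Matrix n n ℝ} (hA : A.PosDefQuad)
    (hL : Function.Injective L.mulVec) : (Lᵀ * A * L).PosDefQuad := by
  intro x hx
  have hLx : L *ᵥ x ≠ 0 := fun h => hx (hL (h.trans (mulVec_zero L).symm))
  have key : (Lᵀ * A * L) *ᵥ x ⬝ᵥ x = A *ᵥ (L *ᵥ x) ⬝ᵥ L *ᵥ x := by
    rw [← mulVec_mulVec, ← mulVec_mulVec, mulVec_transpose, dotProduct_comm, dotProduct_mulVec,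
      dotProduct_comm]
  exact key ▸ hA _ hLx

end LCP

theorem Matrix.PosDefQuad.pprop {m : ℕ} {B : Matrix (Fin m) (Fin m) ℝ} (hB : B.PosDefQuad) :
    Pprop B := fun q =>
  let ⟨x, hx⟩ := hB.exists_isLCPSolution q
  ⟨x, hx, fun _ hy => IsLCPSolution.eq_of_posDefQuad hB hy hx⟩

theorem Pprop.qprop {m : ℕ} {B : Matrix (Fin m) (Fin m) ℝ} (h : Pprop B) : Qprop B :=
  fun q => (h q).exists

theorem Qprop.sprop {m : ℕ} {B : Matrix (Fin m) (Fin m) ℝ} (h : Qprop B) : Sprop B :=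
  fun q => let ⟨x, hx, hBx, _⟩ := h q; ⟨x, hx, hBx⟩

theorem not_sprop_of_row_nonpos {m : ℕ} {B : Matrix (Fin m) (Fin m) ℝ} {k : Fin m}
    (hk : ∀ j, B k j ≤ 0) : ¬ Sprop B := fun hS => by
  obtain ⟨x, hx, hBx⟩ := hS (-1)
  have : (B *ᵥ x) k ≤ 0 :=
    Finset.sum_nonpos (s := Finset.univ) fun j _ => mul_nonpos_of_nonpos_of_nonneg (hk j) (hx j)
  linarith [hBx k, show (B *ᵥ x + -1) k = (B *ᵥ x) k - 1 by simp [sub_eq_add_neg]]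

theorem posDefQuad_of_forall_sprop {m : ℕ} {A : Matrix (Fin m) (Fin m) ℝ}
    (hS : ∀ L : Matrix (Fin m) (Fin m) ℝ, IsUnit L → Sprop (Lᵀ * A * L)) : A.PosDefQuad := by
  intro v hv
  by_contra! hAv
  have hspan : Submodule.span ℝ {y | v ⬝ᵥ A *ᵥ y ≤ 0} = ⊤ :=
    Submodule.span_eq_top_of_forall_mem_or_neg_mem fun y => by
      simpa only [Set.mem_ofPred_eq, mulVec_neg, dotProduct_neg, neg_nonpos] using le_total _ 0
  obtain ⟨L, hL, ⟨k, hk⟩, hLs⟩ := exists_isUnit_row_eq_of_span_eq_top hspan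
    (by simpa only [Set.mem_ofPred_eq, dotProduct_comm v] using hAv) hv
  refine not_sprop_of_row_nonpos (k := k) (fun j => ?_) (hS Lᵀ (isUnit_transpose L |>.2 hL))
  rw [transpose_transpose, mul_mul_transpose_apply, hk]
  exact hLs j

/-- The following are equivalent: every member of `D(A)` is an S-matrix; every member of
`D(A)` is a Q-matrix; every member of `D(A)` is a P-matrix; `A` is positive definite. -/
theorem stmt11 {m : ℕ} (A : Matrix (Fin m) (Fin m) ℝ) :
    ((∀ L : Matrix (Fin m) (Fin m) ℝ, IsUnit L → Sprop (Lᵀ * A * L)) ↔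
      (∀ x : Fin m → ℝ, x ≠ 0 → 0 < (A.mulVec x) ⬝ᵥ x)) ∧
    ((∀ L : Matrix (Fin m) (Fin m) ℝ, IsUnit L → Qprop (Lᵀ * A * L)) ↔
      (∀ x : Fin m → ℝ, x ≠ 0 → 0 < (A.mulVec x) ⬝ᵥ x)) ∧
    ((∀ L : Matrix (Fin m) (Fin m) ℝ, IsUnit L → Pprop (Lᵀ * A * L)) ↔
      (∀ x : Fin m → ℝ, x ≠ 0 → 0 < (A.mulVec x) ⬝ᵥ x)) := by
  have hP : A.PosDefQuad → ∀ L : Matrix (Fin m) (Fin m) ℝ, IsUnit L → Pprop (Lᵀ * A * L) :=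
    fun hA L hL => (hA.transpose_mul_mul (mulVec_injective_iff_isUnit.2 hL)).pprop
  exact ⟨⟨posDefQuad_of_forall_sprop, fun hA L hL => (hP hA L hL).qprop.sprop⟩,
    ⟨fun h => posDefQuad_of_forall_sprop fun L hL => (h L hL).sprop,
      fun hA L hL => (hP hA L hL).qprop⟩,
    ⟨fun h => posDefQuad_of_forall_sprop fun L hL => (h L hL).qprop.sprop, hP⟩⟩
end

section
/- For A ∈ ℝ^{m×m} (m ≥ 1), the congruence orbit D(A) contains a matrix with a positive diagonal element if and only if D(A) contains a matrix all of whose entries are positive. -/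
open Matrix

-- P with entries: P a b = ε δ_{ab} + [a = i]
noncomputable def myP {m : ℕ} (i : Fin m) (ε : ℝ) : Matrix (Fin m) (Fin m) ℝ :=
  Matrix.of fun a b => ε * (if a = b then 1 else 0) + (if a = i then 1 else 0)

lemma myP_isUnit {m : ℕ} (i : Fin m) {ε : ℝ} (hε : 0 < ε) : IsUnit (myP i ε) := by
  set c : ℝ := 1 / (ε * (ε + 1)) with hc
  set Q : Matrix (Fin m) (Fin m) ℝ :=
    Matrix.of fun a b => ε⁻¹ * (if a = b then 1 else 0) - c * (if a = i then 1 else 0) with hQ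
  have hPQ : myP i ε * Q = 1 := by
    ext j k
    simp only [Matrix.mul_apply, myP, Matrix.of_apply, hQ, Matrix.one_apply]
    simp only [add_mul, mul_sub, mul_ite, mul_one, mul_zero, ite_mul, zero_mul, one_mul,
      Finset.sum_add_distrib, Finset.sum_sub_distrib, Finset.sum_ite_eq, Finset.sum_ite_eq',
      Finset.mem_univ, if_true]
    have h1 : ε ≠ 0 := ne_of_gt hε
    have h2 : ε + 1 ≠ 0 := by positivity
    by_cases hji : j = i <;> by_cases hjk : j = k <;>
      simp [hji, hjk, hc] <;> split_ifs <;> field_simp <;> ring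
  have := Matrix.isUnit_det_of_right_inverse hPQ
  exact (Matrix.isUnit_iff_isUnit_det _).2 this

lemma myP_entry {m : ℕ} (i : Fin m) (ε : ℝ) (B : Matrix (Fin m) (Fin m) ℝ) (j k : Fin m) :
    ((myP i ε)ᵀ * B * myP i ε) j k
      = ε ^ 2 * B j k + ε * (B j i + B i k) + B i i := by
  simp only [Matrix.mul_apply, Matrix.transpose_apply, myP, Matrix.of_apply]
  simp only [add_mul, mul_add, mul_ite, mul_one, mul_zero, ite_mul, zero_mul, one_mul,
    Finset.sum_add_distrib, Finset.mul_sum, Finset.sum_ite_eq, Finset.sum_ite_eq',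
    Finset.mem_univ, if_true]
  ring

/-- For `m ≥ 1`, the congruence orbit of `A` contains a matrix with a positive diagonal
element if and only if it contains a matrix all of whose entries are positive. -/
theorem stmt13 {m : ℕ} (hm : 1 ≤ m) (A : Matrix (Fin m) (Fin m) ℝ) :
    (∃ L : Matrix (Fin m) (Fin m) ℝ, IsUnit L ∧ ∃ i : Fin m, 0 < (Lᵀ * A * L) i i) ↔
    (∃ L : Matrix (Fin m) (Fin m) ℝ, IsUnit L ∧ ∀ i j : Fin m, 0 < (Lᵀ * A * L) i j) := by
  constructor
  · rintro ⟨L, hL, i, hpos⟩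
    set B := Lᵀ * A * L with hB
    have hkey : ∃ ε : ℝ, 0 < ε ∧
        ∀ p : Fin m × Fin m, 0 < ε ^ 2 * B p.1 p.2 + ε * (B p.1 i + B i p.2) + B i i := by
      have h1 : ∀ p : Fin m × Fin m, ∀ᶠ ε : ℝ in nhds 0,
          0 < ε ^ 2 * B p.1 p.2 + ε * (B p.1 i + B i p.2) + B i i := by
        intro p
        have hc : Continuous fun ε : ℝ =>
            ε ^ 2 * B p.1 p.2 + ε * (B p.1 i + B i p.2) + B i i := by continuity
        have h0 : (0:ℝ) < (0:ℝ) ^ 2 * B p.1 p.2 + 0 * (B p.1 i + B i p.2) + B i i := by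
          simpa using hpos
        exact (hc.tendsto 0).eventually (eventually_gt_nhds h0)
      have h2 : ∀ᶠ ε : ℝ in nhdsWithin 0 (Set.Ioi 0), (0 < ε ∧
          ∀ p : Fin m × Fin m, 0 < ε ^ 2 * B p.1 p.2 + ε * (B p.1 i + B i p.2) + B i i) := by
        refine Filter.Eventually.and ?_ ?_
        · exact eventually_mem_nhdsWithin.mono fun x hx => hx
        · exact nhdsWithin_le_nhds (Filter.eventually_all.2 h1)
      obtain ⟨ε, hε⟩ := h2.exists
      exact ⟨ε, hε.1, hε.2⟩
    obtain ⟨ε, hε, hjk⟩ := hkey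
    refine ⟨L * myP i ε, hL.mul (myP_isUnit i hε), fun j k => ?_⟩
    have hrw : ((L * myP i ε)ᵀ * A * (L * myP i ε)) j k
        = ((myP i ε)ᵀ * B * myP i ε) j k := by
      rw [hB, Matrix.transpose_mul]
      simp only [Matrix.mul_assoc]
    rw [hrw, myP_entry]
    exact hjk (j, k)
  · rintro ⟨L, hL, h⟩
    exact ⟨L, hL, ⟨0, hm⟩, h _ _⟩
end

section
/- If A ∈ ℝ^{m×m} has the K-Q-property (respectively K-P-property) for a cone K and L is invertible, then LᵀAL has the (L⁻¹K)-Q-property (respectively (L⁻¹K)-P-property). -/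
open Matrix

/-- The dual cone of a set in `ℝ^m`. -/
def dualSet {m : ℕ} (W : Set (Fin m → ℝ)) : Set (Fin m → ℝ) :=
  {y | ∀ x ∈ W, 0 ≤ x ⬝ᵥ y}

/-- `A` has the K-Q-property: `LCP(K, A, q)` is solvable for every `q`. -/
def KQprop {m : ℕ} (K : Set (Fin m → ℝ)) (A : Matrix (Fin m) (Fin m) ℝ) : Prop :=
  ∀ q : Fin m → ℝ, ∃ x ∈ K, A.mulVec x + q ∈ dualSet K ∧ x ⬝ᵥ (A.mulVec x + q) = 0

/-- `A` has the K-P-property: `LCP(K, A, q)` has a unique solution for every `q`. -/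
def KPprop {m : ℕ} (K : Set (Fin m → ℝ)) (A : Matrix (Fin m) (Fin m) ℝ) : Prop :=
  ∀ q : Fin m → ℝ, ∃! x, x ∈ K ∧ A.mulVec x + q ∈ dualSet K ∧ x ⬝ᵥ (A.mulVec x + q) = 0

lemma mulVec_dot {m : ℕ} (M : Matrix (Fin m) (Fin m) ℝ) (v w : Fin m → ℝ) :
    M.mulVec v ⬝ᵥ w = v ⬝ᵥ Mᵀ.mulVec w := by
  rw [dotProduct_comm, Matrix.dotProduct_mulVec, ← Matrix.mulVec_transpose,
    dotProduct_comm]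

/-- If `A` has the K-Q-property (resp. K-P-property) and `L` is invertible, then `LᵀAL`
has the `(L⁻¹K)`-Q-property (resp. `(L⁻¹K)`-P-property). -/
theorem stmt17 {m : ℕ} (K : Set (Fin m → ℝ)) (A L : Matrix (Fin m) (Fin m) ℝ)
    (hL : IsUnit L) :
    (KQprop K A → KQprop ((L⁻¹).mulVec '' K) (Lᵀ * A * L)) ∧
    (KPprop K A → KPprop ((L⁻¹).mulVec '' K) (Lᵀ * A * L)) := by
  have hLd : IsUnit L.det := (Matrix.isUnit_iff_isUnit_det L).mp hL
  have hinv1 : L⁻¹ * L = 1 := Matrix.nonsing_inv_mul L hLd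
  have hinv2 : L * L⁻¹ = 1 := Matrix.mul_nonsing_inv L hLd
  have hT1 : Lᵀ * (L⁻¹)ᵀ = 1 := by
    rw [← Matrix.transpose_mul, hinv1, Matrix.transpose_one]
  have hT2 : (L⁻¹)ᵀ * Lᵀ = 1 := by
    rw [← Matrix.transpose_mul, hinv2, Matrix.transpose_one]
  have hLL : ∀ v, (L⁻¹).mulVec (L.mulVec v) = v := by
    intro v; rw [Matrix.mulVec_mulVec, hinv1, Matrix.one_mulVec]
  have hLL' : ∀ v, L.mulVec ((L⁻¹).mulVec v) = v := by
    intro v; rw [Matrix.mulVec_mulVec, hinv2, Matrix.one_mulVec]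
  have hmem : ∀ y, y ∈ (L⁻¹).mulVec '' K ↔ L.mulVec y ∈ K := by
    intro y
    constructor
    · rintro ⟨k, hk, rfl⟩; rwa [hLL']
    · intro h; exact ⟨L.mulVec y, h, hLL y⟩
  have hdual : ∀ z, z ∈ dualSet ((L⁻¹).mulVec '' K) ↔ (L⁻¹)ᵀ.mulVec z ∈ dualSet K := by
    intro z
    constructor
    · intro h k hk
      have := h ((L⁻¹).mulVec k) ⟨k, hk, rfl⟩
      rwa [mulVec_dot] at this
    · rintro h _ ⟨k, hk, rfl⟩
      rw [mulVec_dot]; exact h k hk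
  -- key rewriting of the vector
  have hvec : ∀ (q y : Fin m → ℝ),
      (Lᵀ * A * L).mulVec y + q
        = Lᵀ.mulVec (A.mulVec (L.mulVec y) + ((L⁻¹)ᵀ).mulVec q) := by
    intro q y
    simp only [Matrix.mulVec_add, Matrix.mulVec_mulVec, hT1, Matrix.one_mulVec,
      Matrix.mul_assoc]
  -- solution equivalence
  have hsol : ∀ (q y : Fin m → ℝ),
      (y ∈ (L⁻¹).mulVec '' K ∧ (Lᵀ * A * L).mulVec y + q ∈ dualSet ((L⁻¹).mulVec '' K) ∧
        y ⬝ᵥ ((Lᵀ * A * L).mulVec y + q) = 0)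
      ↔ (L.mulVec y ∈ K ∧
          A.mulVec (L.mulVec y) + ((L⁻¹)ᵀ).mulVec q ∈ dualSet K ∧
          (L.mulVec y) ⬝ᵥ (A.mulVec (L.mulVec y) + ((L⁻¹)ᵀ).mulVec q) = 0) := by
    intro q y
    rw [hmem, hdual, hvec, Matrix.mulVec_mulVec, hT2, Matrix.one_mulVec]
    have hdp : y ⬝ᵥ Lᵀ.mulVec (A.mulVec (L.mulVec y) + ((L⁻¹)ᵀ).mulVec q)
        = (L.mulVec y) ⬝ᵥ (A.mulVec (L.mulVec y) + ((L⁻¹)ᵀ).mulVec q) := by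
      rw [mulVec_dot]
    rw [hdp]
  constructor
  · intro hQ q
    obtain ⟨x, hx, hd, hc⟩ := hQ (((L⁻¹)ᵀ).mulVec q)
    refine ⟨(L⁻¹).mulVec x, ?_⟩
    have h := (hsol q ((L⁻¹).mulVec x)).mpr (by rw [hLL']; exact ⟨hx, hd, hc⟩)
    exact ⟨h.1, h.2⟩
  · intro hP q
    obtain ⟨x, ⟨hx, hd, hc⟩, huniq⟩ := hP (((L⁻¹)ᵀ).mulVec q)
    refine ⟨(L⁻¹).mulVec x, ?_, ?_⟩
    · exact (hsol q ((L⁻¹).mulVec x)).mpr (by rw [hLL']; exact ⟨hx, hd, hc⟩)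
    · intro y hy
      have h := (hsol q y).mp hy
      have := huniq (L.mulVec y) h
      rw [← hLL y, this]
end

section
/- If A ∈ ℝ^{m×m} is positive definite, then for every simplicial cone K = L(ℝ^m_+) (L invertible) and every q ∈ ℝ^m, the problem LCP(K, A, q) has a unique solution. -/
open Matrix

/-!
On a closed convex cone `K`, the complementarity conditions `x ∈ K`, `Ax + q ∈ K*`,
`⟪x, Ax + q⟫ = 0` are equivalent to the variational inequality `⟪Ax + q, y - x⟫ ≥ 0` for all
`y ∈ K` (test it with `y = 0` and `y = 2x`). In finite dimensions positive definiteness upgrades,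
by compactness of the unit sphere, to `⟪Au, u⟫ ≥ α‖u‖²`. Then, with `C` a Lipschitz constant of
`A` and `c = α / C²`, the map `u ↦ P_K (u - c (Au + q))` is a contraction of ratio
`√(1 - α² / C²)`, since the metric projection `P_K` is nonexpansive, and its fixed point solves the
variational inequality. Adding the inequalities of two solutions `x, y` gives
`⟪A (x - y), x - y⟫ ≤ 0`, hence `x = y`.
-/

open scoped RealInnerProductSpace

section VariationalInequality

variable {E : Type*} [NormedAddCommGroup E] [InnerProductSpace ℝ E]

theorem norm_sub_le_of_forall_inner_le_zero {K : Set E} {a b pa pb : E} (hpa : pa ∈ K)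
    (hpb : pb ∈ K) (ha : ∀ w ∈ K, ⟪a - pa, w - pa⟫ ≤ 0) (hb : ∀ w ∈ K, ⟪b - pb, w - pb⟫ ≤ 0) :
    ‖pa - pb‖ ≤ ‖a - b‖ := by
  have hsq : ‖pa - pb‖ ^ 2 ≤ ⟪a - b, pa - pb⟫ := by
    have h : ⟪a - b, pa - pb⟫ - ‖pa - pb‖ ^ 2 = -⟪a - pa, pb - pa⟫ - ⟪b - pb, pa - pb⟫ := by
      rw [← real_inner_self_eq_norm_sq]
      simp only [inner_sub_left, inner_sub_right]
      ring
    linarith [ha pb hpb, hb pa hpa]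
  nlinarith [real_inner_le_norm (a - b) (pa - pb), norm_nonneg (pa - pb), norm_nonneg (a - b)]

theorem exists_lipschitzWith_one_proj [CompleteSpace E] {K : Set E} (hne : K.Nonempty)
    (hcl : IsClosed K) (hconv : Convex ℝ K) :
    ∃ p : E → E, LipschitzWith 1 p ∧ ∀ u, p u ∈ K ∧ ∀ w ∈ K, ⟪u - p u, w - p u⟫ ≤ 0 := by
  have hproj (u : E) : ∃ v ∈ K, ∀ w ∈ K, ⟪u - v, w - v⟫ ≤ 0 := by
    obtain ⟨v, hv, hmin⟩ := exists_norm_eq_iInf_of_complete_convex hne hcl.isComplete hconv u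
    exact ⟨v, hv, (norm_eq_iInf_iff_real_inner_le_zero hconv hv).1 hmin⟩
  choose p hpK hp using hproj
  refine ⟨p, LipschitzWith.of_dist_le_mul fun a b => ?_, fun u => ⟨hpK u, hp u⟩⟩
  simpa [dist_eq_norm] using norm_sub_le_of_forall_inner_le_zero (hpK a) (hpK b) (hp a) (hp b)

theorem norm_sub_smul_sq_le {w d : E} {α C : ℝ} (hα : 0 ≤ α) (hC : 0 < C)
    (hd : ‖d‖ ≤ C * ‖w‖) (hdw : α * ‖w‖ ^ 2 ≤ ⟪d, w⟫) :
    ‖w - (α / C ^ 2) • d‖ ^ 2 ≤ (1 - α ^ 2 / C ^ 2) * ‖w‖ ^ 2 := by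
  have hexp : ‖w - (α / C ^ 2) • d‖ ^ 2
      = ‖w‖ ^ 2 - 2 * (α / C ^ 2) * ⟪d, w⟫ + (α / C ^ 2) ^ 2 * ‖d‖ ^ 2 := by
    rw [norm_sub_sq_real, norm_smul, real_inner_smul_right, real_inner_comm, Real.norm_eq_abs,
      abs_of_nonneg (by positivity)]
    ring
  have hd2 : ‖d‖ ^ 2 ≤ (C * ‖w‖) ^ 2 := pow_le_pow_left₀ (norm_nonneg d) hd 2
  have h1 := mul_le_mul_of_nonneg_left hdw (by positivity : 0 ≤ 2 * (α / C ^ 2))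
  have h2 := mul_le_mul_of_nonneg_left hd2 (by positivity : 0 ≤ (α / C ^ 2) ^ 2)
  rw [hexp]
  have key : (1 - α ^ 2 / C ^ 2) * ‖w‖ ^ 2
      = ‖w‖ ^ 2 - 2 * (α / C ^ 2) * (α * ‖w‖ ^ 2) + (α / C ^ 2) ^ 2 * (C * ‖w‖) ^ 2 := by
    field_simp
    ring
  linarith

theorem exists_forall_inner_sub_nonneg [CompleteSpace E] {K : Set E} (hne : K.Nonempty)
    (hcl : IsClosed K) (hconv : Convex ℝ K) {F : E → E} {α C : ℝ} (hα : 0 < α) (hC : 0 < C)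
    (hF_lip : ∀ u v, ‖F u - F v‖ ≤ C * ‖u - v‖)
    (hF_mono : ∀ u v, α * ‖u - v‖ ^ 2 ≤ ⟪F u - F v, u - v⟫) :
    ∃ x ∈ K, ∀ y ∈ K, 0 ≤ ⟪F x, y - x⟫ := by
  obtain ⟨p, hp_lip, hp⟩ := exists_lipschitzWith_one_proj hne hcl hconv
  set c := α / C ^ 2
  set k := √(1 - α ^ 2 / C ^ 2)
  have hk : k < 1 := by
    rw [Real.sqrt_lt' one_pos]
    have : 0 < α ^ 2 / C ^ 2 := by positivity
    linarith
  have hf : ContractingWith k.toNNReal fun u => p (u - c • F u) := by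
    refine ⟨Real.toNNReal_lt_one.2 hk, LipschitzWith.of_dist_le' fun u v => ?_⟩
    calc dist (p (u - c • F u)) (p (v - c • F v)) ≤ ‖(u - v) - c • (F u - F v)‖ := by
          simpa [dist_eq_norm, smul_sub, sub_sub_sub_comm]
            using hp_lip.dist_le_mul (u - c • F u) (v - c • F v)
      _ ≤ √((1 - α ^ 2 / C ^ 2) * ‖u - v‖ ^ 2) :=
          Real.le_sqrt_of_sq_le (norm_sub_smul_sq_le hα.le hC (hF_lip u v) (hF_mono u v))
      _ = k * dist u v := by rw [Real.sqrt_mul' _ (sq_nonneg _), Real.sqrt_sq (norm_nonneg _),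
          dist_eq_norm]
  have : Nonempty E := ⟨0⟩
  set x := ContractingWith.fixedPoint _ hf
  have hx : p (x - c • F x) = x := hf.fixedPoint_isFixedPt
  refine ⟨x, hx ▸ (hp _).1, fun y hy => ?_⟩
  have h := (hp (x - c • F x)).2 y hy
  rw [hx, sub_sub_cancel_left, inner_neg_left, real_inner_smul_left] at h
  exact (mul_nonneg_iff_of_pos_left (by positivity : 0 < c)).1 (by linarith)

theorem eq_of_forall_inner_sub_nonneg {K : Set E} {F : E → E}
    (hF : ∀ u v, u ≠ v → 0 < ⟪F u - F v, u - v⟫) {x y : E} (hx : x ∈ K) (hy : y ∈ K)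
    (hxK : ∀ z ∈ K, 0 ≤ ⟪F x, z - x⟫) (hyK : ∀ z ∈ K, 0 ≤ ⟪F y, z - y⟫) : x = y := by
  by_contra hne
  have h : ⟪F x - F y, x - y⟫ = -(⟪F x, y - x⟫ + ⟪F y, x - y⟫) := by
    simp only [inner_sub_left, inner_sub_right]
    ring
  linarith [hF x y hne, hxK y hy, hyK x hx]

theorem forall_inner_sub_nonneg_iff [CompleteSpace E] {K : Set E}
    (hK : ∀ x ∈ K, ∀ t : ℝ, 0 ≤ t → t • x ∈ K) {x z : E} (hx : x ∈ K) :
    (∀ y ∈ K, 0 ≤ ⟪z, y - x⟫) ↔ z ∈ ProperCone.innerDual K ∧ ⟪x, z⟫ = 0 := by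
  simp only [ProperCone.mem_innerDual, fun y => real_inner_comm y z, inner_sub_left]
  refine ⟨fun h => ?_, fun ⟨hz, hzx⟩ y hy => by linarith [hz hy]⟩
  have h0 := h _ (hK x hx 0 le_rfl)
  have h2 := h _ (hK x hx 2 zero_le_two)
  rw [real_inner_smul_left] at h0 h2
  have hzx : ⟪x, z⟫ = 0 := by linarith
  exact ⟨fun y hy => by linarith [h y hy], hzx⟩

theorem exists_pos_mul_norm_sq_le_inner [FiniteDimensional ℝ E] (T : E →L[ℝ] E)
    (hT : ∀ u ≠ 0, 0 < ⟪T u, u⟫) : ∃ α > 0, ∀ u, α * ‖u‖ ^ 2 ≤ ⟪T u, u⟫ := by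
  rcases subsingleton_or_nontrivial E with hE | hE
  · exact ⟨1, one_pos, fun u => by simp [Subsingleton.elim u 0]⟩
  have hcont : Continuous fun u => ⟪T u, u⟫ := T.continuous.inner continuous_id
  obtain ⟨u₀, hu₀, hmin⟩ := (isCompact_sphere (0 : E) 1).exists_isMinOn
    (NormedSpace.sphere_nonempty.2 zero_le_one) hcont.continuousOn
  refine ⟨⟪T u₀, u₀⟫, hT u₀ (ne_zero_of_mem_unit_sphere ⟨u₀, hu₀⟩), fun u => ?_⟩
  rcases eq_or_ne u 0 with rfl | hu
  · simp
  have hr : 0 < ‖u‖ := norm_pos_iff.2 hu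
  have hv : ‖u‖⁻¹ • u ∈ Metric.sphere (0 : E) 1 := by
    simp [norm_smul, hr.ne']
  have hscale : ⟪T u, u⟫ = ‖u‖ ^ 2 * ⟪T (‖u‖⁻¹ • u), ‖u‖⁻¹ • u⟫ := by
    rw [map_smul, real_inner_smul_left, real_inner_smul_right]
    field_simp
  rw [hscale, mul_comm]
  exact mul_le_mul_of_nonneg_left (hmin hv) (sq_nonneg _)

theorem existsUnique_complementarity [FiniteDimensional ℝ E] {K : Set E} (hne : K.Nonempty)
    (hcl : IsClosed K) (hconv : Convex ℝ K) (hK : ∀ x ∈ K, ∀ t : ℝ, 0 ≤ t → t • x ∈ K)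
    (T : E →L[ℝ] E) (hT : ∀ u ≠ 0, 0 < ⟪T u, u⟫) (q : E) :
    ∃! x, x ∈ K ∧ T x + q ∈ ProperCone.innerDual K ∧ ⟪x, T x + q⟫ = 0 := by
  obtain ⟨α, hα, hTα⟩ := exists_pos_mul_norm_sq_le_inner T hT
  have hF (u v : E) : T u + q - (T v + q) = T (u - v) := by rw [map_sub]; abel
  obtain ⟨x, hxK, hx⟩ := exists_forall_inner_sub_nonneg hne hcl hconv hα
    (by positivity : 0 < ‖T‖ + 1) (F := fun u => T u + q)
    (fun u v => by simpa [hF] using T.le_of_opNorm_le (le_add_of_nonneg_right zero_le_one) (u - v))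
    (fun u v => by simpa [hF] using hTα (u - v))
  refine ⟨x, ⟨hxK, (forall_inner_sub_nonneg_iff hK hxK).1 hx⟩, ?_⟩
  rintro y ⟨hyK, hy⟩
  refine eq_of_forall_inner_sub_nonneg (F := fun u => T u + q) (fun u v huv => ?_) hyK hxK
    ((forall_inner_sub_nonneg_iff hK hyK).2 hy) hx
  simpa [hF] using hT (u - v) (sub_ne_zero.2 huv)

end VariationalInequality

section Coordinates

variable {m : ℕ}

theorem real_inner_eq_dotProduct (x y : EuclideanSpace ℝ (Fin m)) :
    ⟪x, y⟫ = x.ofLp ⬝ᵥ y.ofLp := by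
  rw [EuclideanSpace.inner_eq_star_dotProduct, star_trivial, dotProduct_comm]

theorem mem_innerDual_preimage_ofLp_iff {K : Set (Fin m → ℝ)} {w : EuclideanSpace ℝ (Fin m)} :
    w ∈ ProperCone.innerDual (WithLp.ofLp ⁻¹' K) ↔ w.ofLp ∈ dualSet K := by
  simp only [ProperCone.mem_innerDual, real_inner_eq_dotProduct]
  exact ⟨fun h x hx => h (x := WithLp.toLp 2 x) hx, fun h y hy => h _ hy⟩

theorem existsUnique_complementarity_mulVec {K : Set (Fin m → ℝ)} (hne : K.Nonempty)
    (hcl : IsClosed K) (hconv : Convex ℝ K) (hK : ∀ x ∈ K, ∀ t : ℝ, 0 ≤ t → t • x ∈ K)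
    (A : Matrix (Fin m) (Fin m) ℝ) (hA : ∀ x : Fin m → ℝ, x ≠ 0 → 0 < A *ᵥ x ⬝ᵥ x)
    (q : Fin m → ℝ) :
    ∃! x, x ∈ K ∧ A *ᵥ x + q ∈ dualSet K ∧ x ⬝ᵥ (A *ᵥ x + q) = 0 := by
  have hE := existsUnique_complementarity (K := WithLp.ofLp ⁻¹' K)
    (hne.preimage (WithLp.equiv 2 (Fin m → ℝ)).surjective)
    (hcl.preimage (PiLp.continuous_ofLp 2 _))
    (hconv.linear_preimage (WithLp.linearEquiv 2 ℝ (Fin m → ℝ)).toLinearMap)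
    (fun u hu t ht => by simpa using hK _ hu t ht) (toEuclideanCLM (𝕜 := ℝ) A)
    (fun u hu => by
      rw [real_inner_comm, inner_toEuclideanCLM, dotProduct_comm]
      exact hA _ (by simpa using hu))
    (WithLp.toLp 2 q)
  refine ((WithLp.equiv 2 (Fin m → ℝ)).existsUnique_congr fun u => ?_).1 hE
  simp only [Set.mem_preimage, mem_innerDual_preimage_ofLp_iff, real_inner_eq_dotProduct,
    WithLp.ofLp_add, ofLp_toEuclideanCLM, WithLp.equiv_apply]

def simplicialCone (L : Matrix (Fin m) (Fin m) ℝ) : Set (Fin m → ℝ) :=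
  L.mulVec '' {v : Fin m → ℝ | ∀ i, 0 ≤ v i}

theorem isClosed_simplicialCone {L : Matrix (Fin m) (Fin m) ℝ} (hL : IsUnit L) :
    IsClosed (simplicialCone L) := by
  have hL' : IsUnit L.det := (isUnit_iff_isUnit_det L).1 hL
  rw [simplicialCone, Set.image_eq_preimage_of_inverse (g := (L⁻¹ *ᵥ ·))
    (fun v => by simp [mulVec_mulVec, nonsing_inv_mul L hL'])
    (fun v => by simp [mulVec_mulVec, mul_nonsing_inv L hL'])]
  exact (isClosed_Ici (a := (0 : Fin m → ℝ))).preimage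
    (continuous_const.matrix_mulVec continuous_id)

theorem convex_simplicialCone (L : Matrix (Fin m) (Fin m) ℝ) : Convex ℝ (simplicialCone L) :=
  (convex_Ici (0 : Fin m → ℝ)).linear_image L.mulVecLin

theorem smul_mem_simplicialCone (L : Matrix (Fin m) (Fin m) ℝ) :
    ∀ x ∈ simplicialCone L, ∀ t : ℝ, 0 ≤ t → t • x ∈ simplicialCone L := by
  rintro _ ⟨v, hv, rfl⟩ t ht
  exact ⟨t • v, fun i => mul_nonneg ht (hv i), mulVec_smul L t v⟩

end Coordinates

/-- If `A` is positive definite, then for every simplicial cone `K = L(ℝ^m_+)` and every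
`q`, the problem `LCP(K, A, q)` has a unique solution. -/
theorem stmt18 {m : ℕ} (A : Matrix (Fin m) (Fin m) ℝ)
    (hpd : ∀ x : Fin m → ℝ, x ≠ 0 → 0 < (A.mulVec x) ⬝ᵥ x)
    (L : Matrix (Fin m) (Fin m) ℝ) (hL : IsUnit L) (q : Fin m → ℝ) :
    ∃! x : Fin m → ℝ, x ∈ L.mulVec '' {v : Fin m → ℝ | ∀ i, 0 ≤ v i} ∧
      A.mulVec x + q ∈ dualSet (L.mulVec '' {v : Fin m → ℝ | ∀ i, 0 ≤ v i}) ∧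
      x ⬝ᵥ (A.mulVec x + q) = 0 :=
  existsUnique_complementarity_mulVec (K := simplicialCone L) ⟨0, 0, fun _ => le_rfl, mulVec_zero L⟩
    (isClosed_simplicialCone hL) (convex_simplicialCone L) (smul_mem_simplicialCone L) A hpd q
end
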